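/- arXiv:1903.08155 — 2 statements merged into one kernel-verified Lean document; each statement's English description precedes it below -/
import Mathlib

section
/- Let m,p>0 with 0<mp<1, b>0, and let φ: [0,∞)→(0,1] be the inverse of the function F(z) = ∫_z^1 (m/s)·[ b/p + (m(1+p))/(p(1−mp)(1+m)) s^{1−mp} ]^{−1/(1+p)} ds (so x = F(φ(x))). Then ln φ(x) ∼ −(1/m)(b/p)^{1/(1+p)} x as x → +∞, i.e. lim_{x→∞} ln φ(x) / x = −(1/m)(b/p)^{1/(1+p)}. -/
open Real Set Filter

private lemma rpow_add_le_add_rpow' {x y q : ℝ} (hx : 0 ≤ x) (hy : 0 ≤ y)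
    (hq : 0 ≤ q) (hq1 : q ≤ 1) : (x + y) ^ q ≤ x ^ q + y ^ q := by
  have h := NNReal.rpow_add_le_add_rpow x.toNNReal y.toNNReal hq hq1
  have h2 := NNReal.coe_le_coe.2 h
  rw [NNReal.coe_rpow, NNReal.coe_add, NNReal.coe_add, NNReal.coe_rpow, NNReal.coe_rpow,
    Real.coe_toNNReal x hx, Real.coe_toNNReal y hy] at h2
  exact h2

/-- Logarithmic asymptotics of the stationary profile `φ = F⁻¹`:
`ln φ(x) / x → -(1/m)(b/p)^{1/(1+p)}` as `x → +∞`. -/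
theorem log_phi_asymptotics
    (m p b : ℝ) (hm : 0 < m) (hp : 0 < p) (hmp0 : 0 < m * p) (hmp : m * p < 1)
    (hb : 0 < b)
    (F : ℝ → ℝ)
    (hF : ∀ z, F z = ∫ s in z..1, (m / s) *
      (b / p + (m * (1 + p)) / (p * (1 - m * p) * (1 + m)) * s ^ (1 - m * p))
        ^ (-(1 / (1 + p))))
    (φ : ℝ → ℝ)
    (hφrange : ∀ x ≥ 0, 0 < φ x ∧ φ x ≤ 1)
    (hφinv : ∀ x ≥ 0, F (φ x) = x) :
    Tendsto (fun x => Real.log (φ x) / x) atTop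
      (nhds (-(1 / m) * (b / p) ^ (1 / (1 + p)))) := by
  have hp1 : (0:ℝ) < 1 + p := by linarith
  set q : ℝ := 1 / (1 + p) with hqdef
  have hq : 0 < q := by positivity
  have hq1 : q ≤ 1 := by rw [hqdef, div_le_one hp1]; linarith
  set a0 : ℝ := b / p with ha0def
  have ha0 : 0 < a0 := div_pos hb hp
  set e : ℝ := 1 - m * p with hedef
  have he : 0 < e := by rw [hedef]; linarith
  set K : ℝ := m * (1 + p) / (p * e * (1 + m)) with hKdef
  have hK : 0 < K := by
    apply div_pos (by positivity)
    positivity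
  have haq : 0 < a0 ^ q := Real.rpow_pos_of_pos ha0 q
  set C : ℝ := m * K ^ q / (a0 ^ q * a0 ^ q) with hCdef
  have hC : 0 < C := by positivity
  set M : ℝ := C / (e * q) with hMdef
  have hM : 0 < M := by positivity
  -- key quantitative bound
  have key : ∀ z : ℝ, 0 < z → z ≤ 1 → |F z + m * a0 ^ (-q) * Real.log z| ≤ M := by
    intro z hz hz1
    set g : ℝ → ℝ := fun s => a0 + K * s ^ e with hgdef
    have hgpos : ∀ s ∈ Icc z (1:ℝ), 0 < g s := by
      intro s hs
      have hs0 : 0 < s := lt_of_lt_of_le hz hs.1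
      have : 0 ≤ K * s ^ e := by positivity
      simp only [hgdef]; linarith
    have hne : ∀ s ∈ Icc z (1:ℝ), s ≠ 0 :=
      fun s hs => ne_of_gt (lt_of_lt_of_le hz hs.1)
    -- continuity / integrability
    have hcontg : ContinuousOn g (Icc z 1) := by
      apply continuousOn_const.add
      exact continuousOn_const.mul (continuousOn_id.rpow_const (fun s _ => Or.inr he.le))
    have hconth : ContinuousOn (fun s => m / s * g s ^ (-q)) (Icc z 1) := by
      apply ContinuousOn.mul
      · exact continuousOn_const.div continuousOn_id hne
      · exact hcontg.rpow_const (fun s hs => Or.inl (ne_of_gt (hgpos s hs)))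
    have hconth0 : ContinuousOn (fun s : ℝ => m / s * a0 ^ (-q)) (Icc z 1) :=
      (continuousOn_const.div continuousOn_id hne).mul continuousOn_const
    have huIcc : uIcc z (1:ℝ) = Icc z 1 := uIcc_of_le hz1
    have hint : IntervalIntegrable (fun s => m / s * g s ^ (-q)) MeasureTheory.volume z 1 := by
      apply ContinuousOn.intervalIntegrable; rwa [huIcc]
    have hint0 : IntervalIntegrable (fun s : ℝ => m / s * a0 ^ (-q)) MeasureTheory.volume z 1 := by
      apply ContinuousOn.intervalIntegrable; rwa [huIcc]
    have h0uIcc : (0:ℝ) ∉ uIcc z 1 := notMem_uIcc_of_lt hz one_pos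
    -- compute the reference integral
    have hlog : (∫ s in z..(1:ℝ), m / s * a0 ^ (-q)) = -(m * a0 ^ (-q) * Real.log z) := by
      have h1 : (∫ s in z..(1:ℝ), m / s * a0 ^ (-q))
          = (m * a0 ^ (-q)) * ∫ s in z..(1:ℝ), 1 / s := by
        rw [← intervalIntegral.integral_const_mul]
        apply intervalIntegral.integral_congr
        intro s _; ring
      rw [h1, integral_one_div h0uIcc]
      rw [one_div, Real.log_inv]
      ring
    have hdiff : F z + m * a0 ^ (-q) * Real.log z
        = ∫ s in z..(1:ℝ), (m / s * g s ^ (-q) - m / s * a0 ^ (-q)) := by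
      rw [intervalIntegral.integral_sub hint hint0, ← hF z, hlog]; ring
    -- pointwise bound on the difference
    have hbound : ∀ s ∈ Icc z (1:ℝ),
        |m / s * g s ^ (-q) - m / s * a0 ^ (-q)| ≤ C * s ^ (e * q - 1) := by
      intro s hs
      have hs0 : 0 < s := lt_of_lt_of_le hz hs.1
      have hgges : a0 ≤ g s := le_add_of_nonneg_right (by positivity)
      have hgs : 0 < g s := lt_of_lt_of_le ha0 hgges
      have hgq : 0 < g s ^ q := Real.rpow_pos_of_pos hgs q
      have h1 : g s ^ (-q) ≤ a0 ^ (-q) :=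
        Real.rpow_le_rpow_of_nonpos ha0 hgges (by linarith)
      have hms : 0 ≤ m / s := by positivity
      have habs : |m / s * g s ^ (-q) - m / s * a0 ^ (-q)|
          = m / s * (a0 ^ (-q) - g s ^ (-q)) := by
        rw [abs_of_nonpos (by nlinarith)]; ring
      rw [habs]
      have hsub : g s ^ q ≤ a0 ^ q + K ^ q * s ^ (e * q) := by
        have h2 := rpow_add_le_add_rpow' ha0.le
          (by positivity : (0:ℝ) ≤ K * s ^ e) hq.le hq1
        have h3 : (K * s ^ e) ^ q = K ^ q * s ^ (e * q) := by
          rw [Real.mul_rpow hK.le (by positivity), ← Real.rpow_mul hs0.le]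
        calc g s ^ q = (a0 + K * s ^ e) ^ q := rfl
          _ ≤ a0 ^ q + (K * s ^ e) ^ q := h2
          _ = a0 ^ q + K ^ q * s ^ (e * q) := by rw [h3]
      have hineq : a0 ^ (-q) - g s ^ (-q) ≤ K ^ q * s ^ (e * q) / (a0 ^ q * a0 ^ q) := by
        rw [Real.rpow_neg ha0.le, Real.rpow_neg hgs.le]
        rw [inv_sub_inv (ne_of_gt haq) (ne_of_gt hgq)]
        apply div_le_div₀ (by positivity) (by linarith) (by positivity)
        exact mul_le_mul_of_nonneg_left (Real.rpow_le_rpow ha0.le hgges hq.le) haq.le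
      calc m / s * (a0 ^ (-q) - g s ^ (-q))
          ≤ m / s * (K ^ q * s ^ (e * q) / (a0 ^ q * a0 ^ q)) :=
            mul_le_mul_of_nonneg_left hineq hms
        _ = C * s ^ (e * q - 1) := by
            rw [hCdef, Real.rpow_sub hs0, Real.rpow_one]
            field_simp
    -- integrate the bound
    have hintb : IntervalIntegrable (fun s : ℝ => C * s ^ (e * q - 1))
        MeasureTheory.volume z 1 :=
      (intervalIntegral.intervalIntegrable_rpow (Or.inr h0uIcc)).const_mul C
    have hintegb : (∫ s in z..(1:ℝ), C * s ^ (e * q - 1)) ≤ M := by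
      rw [intervalIntegral.integral_const_mul, integral_rpow (Or.inl (by nlinarith [mul_pos he hq]))]
      have h1 : e * q - 1 + 1 = e * q := by ring
      rw [h1, Real.one_rpow, hMdef, div_eq_mul_inv C (e * q), ← one_div]
      have hz' : 0 ≤ z ^ (e * q) := Real.rpow_nonneg hz.le _
      gcongr
      linarith
    calc |F z + m * a0 ^ (-q) * Real.log z|
        = |∫ s in z..(1:ℝ), (m / s * g s ^ (-q) - m / s * a0 ^ (-q))| := by rw [hdiff]
      _ ≤ ∫ s in z..(1:ℝ), |m / s * g s ^ (-q) - m / s * a0 ^ (-q)| :=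
          intervalIntegral.abs_integral_le_integral_abs hz1
      _ ≤ ∫ s in z..(1:ℝ), C * s ^ (e * q - 1) :=
          intervalIntegral.integral_mono_on hz1 (hint.sub hint0).abs hintb hbound
      _ ≤ M := hintegb
  -- final limit argument
  have hL : ∀ x : ℝ, 1 ≤ x →
      |Real.log (φ x) / x - (-(1 / m) * a0 ^ q)| ≤ a0 ^ q / m * M / x := by
    intro x hx
    have hx0 : (0:ℝ) < x := lt_of_lt_of_le one_pos hx
    obtain ⟨hφ0, hφ1⟩ := hφrange x (by linarith)
    have hFx := hφinv x (by linarith)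
    have hk := key (φ x) hφ0 hφ1
    rw [hFx] at hk
    have hinv : a0 ^ (-q) = (a0 ^ q)⁻¹ := Real.rpow_neg ha0.le q
    have heq : Real.log (φ x) / x - (-(1 / m) * a0 ^ q)
        = a0 ^ q / m * ((x + m * a0 ^ (-q) * Real.log (φ x)) / x) := by
      rw [hinv]; field_simp; ring
    rw [heq, abs_mul, abs_of_pos (by positivity : (0:ℝ) < a0 ^ q / m), abs_div, abs_of_pos hx0]
    rw [mul_div_assoc]
    gcongr
  have htend : Tendsto (fun x : ℝ => a0 ^ q / m * M / x) atTop (nhds 0) :=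
    Tendsto.div_atTop tendsto_const_nhds tendsto_id
  have h0 : Tendsto (fun x => Real.log (φ x) / x - (-(1 / m) * a0 ^ q)) atTop (nhds 0) := by
    apply squeeze_zero_norm' _ htend
    filter_upwards [eventually_ge_atTop (1:ℝ)] with x hx
    simpa [Real.norm_eq_abs] using hL x hx
  have hfinal := h0.add_const (-(1 / m) * a0 ^ q)
  simpa using hfinal
end

section
/- Let m,p>0 with 0<mp<1, β∈(0,mp), b>0, and let C_* = [b(mp−β)^{1+p}/((m(1+p))^p p(m+β))]^{1/(mp−β)}. For constants C₀,ζ₀>0 define f₁(ζ) = C₀(ζ₀−ζ)_+^{(1+p)/(mp−β)} and the operator 𝓛₀f₁ = ((β−mp)/((1+p)(1−β)))·ζ f₁' + f₁/(1−β) − (|(f₁^m)'|^{p−1}(f₁^m)')' + b f₁^β. Then for 0<ζ<ζ₀, 𝓛₀f₁(ζ) = b C₀^β (ζ₀−ζ)^{(1+p)β/(mp−β)} · [ 1 − (C₀/C_*)^{mp−β} + (C₀^{1−β}/(b(1−β)))·ζ₀·(ζ₀−ζ)^{(1+p(1−m−β))/(mp−β)} ]. -/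
/-!
On `(0, ζ₀)` the profile is the pure power `f₁ = C₀ X^α` with `X = ζ₀ - ζ` and
`α = (1 + p)/(mp - β)`, so every term of `𝓛₀ f₁` is a power of `X`. Since
`(β - mp) α / (1 + p) = -1`, the two transport terms add up to `C₀ ζ₀ X^(α-1)/(1 - β)`.
The flux `|(f₁^m)'|^(p-1) (f₁^m)'` is `-(C₀^m m α)^p X^((mα-1)p)`, and its derivative carries
the exponent `(mα - 1)p - 1 = αβ` of the reaction term `b f₁^β`; the constant `C_*` is exactly
the one for which the two coefficients are in the ratio `(C₀/C_*)^(mp-β)`.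
-/

open Real Filter Topology

noncomputable def barrierProfile (C₀ ζ₀ a z : ℝ) : ℝ := C₀ * max (ζ₀ - z) 0 ^ a

lemma mul_rpow_rpow {c X : ℝ} (hc : 0 ≤ c) (hX : 0 ≤ X) (a r : ℝ) :
    (c * X ^ a) ^ r = c ^ r * X ^ (a * r) := by
  rw [mul_rpow hc (rpow_nonneg hX a), rpow_mul hX]

lemma abs_neg_rpow_sub_one_mul_neg {t : ℝ} (ht : 0 < t) (p : ℝ) :
    |-t| ^ (p - 1) * -t = -t ^ p := by
  rw [abs_neg, abs_of_pos ht, mul_neg, ← rpow_add_one ht.ne', sub_add_cancel]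

lemma hasDerivAt_const_mul_sub_rpow (c a : ℝ) {ζ₀ x : ℝ} (hx : x < ζ₀) :
    HasDerivAt (fun z => c * (ζ₀ - z) ^ a) (-(c * a) * (ζ₀ - x) ^ (a - 1)) x := by
  have h := (((hasDerivAt_id x).const_sub ζ₀).rpow_const (p := a)
    (Or.inl (sub_pos.2 hx).ne')).const_mul c
  exact h.congr_deriv (by simp only [id]; ring)

namespace barrierProfile

variable (C₀ ζ₀ a : ℝ) {x : ℝ}

lemma eq_of_lt (hx : x < ζ₀) : barrierProfile C₀ ζ₀ a x = C₀ * (ζ₀ - x) ^ a := by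
  rw [barrierProfile, max_eq_left (sub_pos.2 hx).le]

lemma eventuallyEq (hx : x < ζ₀) :
    barrierProfile C₀ ζ₀ a =ᶠ[𝓝 x] fun z => C₀ * (ζ₀ - z) ^ a := by
  filter_upwards [Iio_mem_nhds hx] with z hz using eq_of_lt C₀ ζ₀ a hz

lemma deriv_eq (hx : x < ζ₀) :
    deriv (barrierProfile C₀ ζ₀ a) x = -(C₀ * a) * (ζ₀ - x) ^ (a - 1) :=
  ((hasDerivAt_const_mul_sub_rpow C₀ a hx).congr_of_eventuallyEq (eventuallyEq C₀ ζ₀ a hx)).deriv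

variable {C₀} (m : ℝ)

lemma rpow_eventuallyEq (hC₀ : 0 ≤ C₀) (hx : x < ζ₀) :
    (fun z => barrierProfile C₀ ζ₀ a z ^ m) =ᶠ[𝓝 x] fun z => C₀ ^ m * (ζ₀ - z) ^ (a * m) := by
  filter_upwards [eventuallyEq C₀ ζ₀ a hx, Iio_mem_nhds hx] with z hz hzx
  rw [hz, mul_rpow_rpow hC₀ (sub_pos.2 hzx).le]

lemma deriv_rpow_eq (hC₀ : 0 ≤ C₀) (hx : x < ζ₀) :
    deriv (fun z => barrierProfile C₀ ζ₀ a z ^ m) x =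
      -(C₀ ^ m * (a * m)) * (ζ₀ - x) ^ (a * m - 1) :=
  ((hasDerivAt_const_mul_sub_rpow _ _ hx).congr_of_eventuallyEq
    (rpow_eventuallyEq ζ₀ a m hC₀ hx)).deriv

lemma deriv_flux_eq (p : ℝ) (hC₀ : 0 < C₀) (ham : 0 < a * m) (hx : x < ζ₀) :
    deriv (fun y => |deriv (fun z => barrierProfile C₀ ζ₀ a z ^ m) y| ^ (p - 1) *
        deriv (fun z => barrierProfile C₀ ζ₀ a z ^ m) y) x =
      (C₀ ^ m * (a * m)) ^ p * ((a * m - 1) * p) * (ζ₀ - x) ^ ((a * m - 1) * p - 1) := by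
  have hK : 0 < C₀ ^ m * (a * m) := mul_pos (rpow_pos_of_pos hC₀ m) ham
  have hflux : (fun y => |deriv (fun z => barrierProfile C₀ ζ₀ a z ^ m) y| ^ (p - 1) *
      deriv (fun z => barrierProfile C₀ ζ₀ a z ^ m) y) =ᶠ[𝓝 x]
      fun y => -((C₀ ^ m * (a * m)) ^ p) * (ζ₀ - y) ^ ((a * m - 1) * p) := by
    filter_upwards [Iio_mem_nhds hx] with y hy
    have hy' : 0 < ζ₀ - y := sub_pos.2 hy
    rw [deriv_rpow_eq ζ₀ a m hC₀.le hy, neg_mul,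
      abs_neg_rpow_sub_one_mul_neg (mul_pos hK (rpow_pos_of_pos hy' _)),
      mul_rpow_rpow hK.le hy'.le, neg_mul]
  rw [((hasDerivAt_const_mul_sub_rpow _ _ hx).congr_of_eventuallyEq hflux).deriv]
  ring

end barrierProfile

section BarrierIdentities

variable {m p β : ℝ}

lemma barrier_drift_eq (C₀ : ℝ) {ζ ζ₀ : ℝ} (hq : m * p - β ≠ 0) (h1p : 1 + p ≠ 0)
    (hζ : ζ < ζ₀) :
    (β - m * p) / ((1 + p) * (1 - β)) * ζ *
        (-(C₀ * ((1 + p) / (m * p - β))) * (ζ₀ - ζ) ^ ((1 + p) / (m * p - β) - 1)) +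
      C₀ * (ζ₀ - ζ) ^ ((1 + p) / (m * p - β)) / (1 - β) =
      C₀ * ζ₀ / (1 - β) * (ζ₀ - ζ) ^ ((1 + p) / (m * p - β) - 1) := by
  have hX : (ζ₀ - ζ) ^ ((1 + p) / (m * p - β)) =
      (ζ₀ - ζ) ^ ((1 + p) / (m * p - β) - 1) * (ζ₀ - ζ) := by
    rw [← rpow_add_one (sub_pos.2 hζ).ne', sub_add_cancel]
  rw [hX]
  field_simp
  ring

lemma barrier_constant_eq {b C₀ Cstar : ℝ} (hm : 0 < m) (hp : 0 < p) (hβ0 : 0 < β)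
    (hβ : β < m * p) (hb : 0 < b) (hC₀ : 0 < C₀)
    (hCstar : Cstar = (b * (m * p - β) ^ (1 + p) /
      ((m * (1 + p)) ^ p * p * (m + β))) ^ (1 / (m * p - β))) :
    b * C₀ ^ β * (C₀ / Cstar) ^ (m * p - β) =
      (C₀ ^ m * ((1 + p) / (m * p - β) * m)) ^ p *
        (((1 + p) / (m * p - β) * m - 1) * p) := by
  have hq : 0 < m * p - β := sub_pos.2 hβ
  have hmp : 0 < m * (1 + p) := by positivity
  have hmβ : 0 < m + β := by positivity
  have hZ : 0 ≤ b * (m * p - β) ^ (1 + p) / ((m * (1 + p)) ^ p * p * (m + β)) := by positivity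
  rw [hCstar, div_rpow hC₀.le (rpow_nonneg hZ _), one_div, rpow_inv_rpow hZ hq.ne',
    mul_rpow (rpow_nonneg hC₀.le m) (by positivity), ← rpow_mul hC₀.le,
    div_mul_eq_mul_div, mul_comm (1 + p) m, div_rpow hmp.le hq.le, rpow_add hq, rpow_one]
  have hC : C₀ ^ (m * p) = C₀ ^ β * C₀ ^ (m * p - β) := by
    rw [← rpow_add hC₀, add_sub_cancel]
  rw [hC]
  have hqp : 0 < (m * p - β) ^ p := rpow_pos_of_pos hq p
  have hmpp : 0 < (m * (1 + p)) ^ p := rpow_pos_of_pos hmp p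
  field_simp
  ring

lemma barrier_flux_exponent (hq : m * p - β ≠ 0) :
    ((1 + p) / (m * p - β) * m - 1) * p - 1 = (1 + p) / (m * p - β) * β := by
  rw [div_mul_eq_mul_div, div_sub_one hq, div_mul_eq_mul_div, div_sub_one hq,
    div_mul_eq_mul_div]
  ring

lemma barrier_exponent_split (hq : m * p - β ≠ 0) :
    (1 + p) / (m * p - β) - 1 =
      (1 + p) / (m * p - β) * β + (1 + p * (1 - m - β)) / (m * p - β) := by
  rw [div_sub_one hq, div_mul_eq_mul_div, ← add_div]
  ring

end BarrierIdentities

theorem barrier_operator_computation_general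
    (m p b β : ℝ) (hm : 0 < m) (hp : 0 < p) (hmp : m * p < 1)
    (hβ0 : 0 < β) (hβ : β < m * p) (hb : 0 < b)
    (Cstar : ℝ)
    (hCstar : Cstar = (b * (m * p - β) ^ (1 + p) /
      ((m * (1 + p)) ^ p * p * (m + β))) ^ (1 / (m * p - β)))
    (C₀ ζ₀ : ℝ) (hC₀ : 0 < C₀)
    (f₁ : ℝ → ℝ)
    (hf₁ : ∀ ζ, f₁ ζ = C₀ * (max (ζ₀ - ζ) 0) ^ ((1 + p) / (m * p - β))) :
    ∀ ζ : ℝ, 0 < ζ → ζ < ζ₀ →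
      ((β - m * p) / ((1 + p) * (1 - β))) * ζ * deriv f₁ ζ + f₁ ζ / (1 - β)
        - deriv (fun y => |deriv (fun z => (f₁ z) ^ m) y| ^ (p - 1) *
            deriv (fun z => (f₁ z) ^ m) y) ζ
        + b * (f₁ ζ) ^ β
      = b * C₀ ^ β * (ζ₀ - ζ) ^ ((1 + p) * β / (m * p - β)) *
          (1 - (C₀ / Cstar) ^ (m * p - β) +
            (C₀ ^ (1 - β) / (b * (1 - β))) * ζ₀ *
              (ζ₀ - ζ) ^ ((1 + p * (1 - m - β)) / (m * p - β))) := by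
  intro ζ _ hζ
  have hq : 0 < m * p - β := sub_pos.2 hβ
  have h1β : 1 - β ≠ 0 := by linarith
  have hX : 0 < ζ₀ - ζ := sub_pos.2 hζ
  have hC : C₀ * ζ₀ = C₀ ^ β * C₀ ^ (1 - β) * ζ₀ := by
    rw [← rpow_add hC₀, add_sub_cancel, rpow_one]
  obtain rfl : f₁ = barrierProfile C₀ ζ₀ ((1 + p) / (m * p - β)) := funext hf₁
  rw [barrierProfile.deriv_flux_eq ζ₀ _ m p hC₀ (by positivity) hζ,
    barrierProfile.deriv_eq _ _ _ hζ, barrierProfile.eq_of_lt _ _ _ hζ,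
    barrier_drift_eq C₀ hq.ne' (by positivity) hζ, mul_rpow_rpow hC₀.le hX.le,
    ← barrier_constant_eq hm hp hβ0 hβ hb hC₀ hCstar, barrier_flux_exponent hq.ne',
    barrier_exponent_split hq.ne', rpow_add hX, mul_div_right_comm (1 + p), hC]
  field_simp
  ring

/-- Exact computation of the self-similar operator `𝓛₀` on the barrier profile
`f₁(ζ) = C₀(ζ₀-ζ)_+^{(1+p)/(mp-β)}` for `0 < ζ < ζ₀`. -/
theorem barrier_operator_computation
    (m p b β : ℝ) (hm : 0 < m) (hp : 0 < p) (hmp0 : 0 < m * p) (hmp : m * p < 1)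
    (hβ0 : 0 < β) (hβ : β < m * p) (hb : 0 < b)
    (Cstar : ℝ)
    (hCstar : Cstar = (b * (m * p - β) ^ (1 + p) /
      ((m * (1 + p)) ^ p * p * (m + β))) ^ (1 / (m * p - β)))
    (C₀ ζ₀ : ℝ) (hC₀ : 0 < C₀) (hζ₀ : 0 < ζ₀)
    (f₁ : ℝ → ℝ)
    (hf₁ : ∀ ζ, f₁ ζ = C₀ * (max (ζ₀ - ζ) 0) ^ ((1 + p) / (m * p - β))) :
    ∀ ζ : ℝ, 0 < ζ → ζ < ζ₀ →
      ((β - m * p) / ((1 + p) * (1 - β))) * ζ * deriv f₁ ζ + f₁ ζ / (1 - β)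
        - deriv (fun y => |deriv (fun z => (f₁ z) ^ m) y| ^ (p - 1) *
            deriv (fun z => (f₁ z) ^ m) y) ζ
        + b * (f₁ ζ) ^ β
      = b * C₀ ^ β * (ζ₀ - ζ) ^ ((1 + p) * β / (m * p - β)) *
          (1 - (C₀ / Cstar) ^ (m * p - β) +
            (C₀ ^ (1 - β) / (b * (1 - β))) * ζ₀ *
              (ζ₀ - ζ) ^ ((1 + p * (1 - m - β)) / (m * p - β))) :=
  barrier_operator_computation_general m p b β hm hp hmp hβ0 hβ hb Cstar hCstar C₀ ζ₀ hC₀ f₁ hf₁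
end
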